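/- Two words u, v ∈ 𝒜_n^* lie in the same connected component of the quasi-crystal graph Γ(hypo_n) if and only if std(u) = std(v) (equivalently, if and only if u and v have the same recording ribbon under the Krob–Thibon insertion algorithm). -/

import Mathlib

/-!
Common setup: words over the alphabet `𝒜_n = {1,…,n}` (modelled as `List ℕ`),
quasi-Kashiwara operators, the quasi-crystal graph, Kashiwara operators,
quasi-ribbon words, and the hypoplactic congruence.
-/

namespace HypoCrystal

noncomputable section
open scoped Classical

/-- `u` is a word over the alphabet `𝒜_n = {1,…,n}`. -/
def IsWord (n : ℕ) (u : List ℕ) : Prop := ∀ a ∈ u, 1 ≤ a ∧ a ≤ n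

/-- `u` has an `i`-inversion: some letter `i+1` occurs strictly to the left of some letter `i`. -/
def HasInv (i : ℕ) (u : List ℕ) : Prop :=
  ∃ v w x : List ℕ, u = v ++ (i + 1) :: w ++ i :: x

/-- Replace the first (leftmost) occurrence of `a` by `b`, if any; otherwise `none`. -/
def replaceFirst (a b : ℕ) : List ℕ → Option (List ℕ)
  | [] => none
  | x :: xs => if x = a then some (b :: xs) else (replaceFirst a b xs).map (x :: ·)

/-- The quasi-Kashiwara raising operator `e_i` (partial map, `none` = undefined):
if `u` has an `i`-inversion it is undefined; otherwise it replaces the leftmost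
letter `i+1` by `i` (undefined if there is no letter `i+1`). -/
def qe (i : ℕ) (u : List ℕ) : Option (List ℕ) :=
  if HasInv i u then none else replaceFirst (i + 1) i u

/-- The quasi-Kashiwara lowering operator `f_i` (partial map, `none` = undefined):
if `u` has an `i`-inversion it is undefined; otherwise it replaces the rightmost
letter `i` by `i+1` (undefined if there is no letter `i`). -/
def qf (i : ℕ) (u : List ℕ) : Option (List ℕ) :=
  if HasInv i u then none else (replaceFirst i (i + 1) u.reverse).map List.reverse

/-- Weight of a word: `wt u a` is the number of occurrences of the letter `a` in `u`. -/
def wt (u : List ℕ) : ℕ → ℕ := fun a => u.count a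

/-- There is an edge labelled `i` from `u` to `v` in the quasi-crystal graph `Γ(hypo_n)`. -/
def Edge (n i : ℕ) (u v : List ℕ) : Prop := 1 ≤ i ∧ i < n ∧ qf i u = some v

/-- `u` and `v` are adjacent (in the underlying undirected graph) in `Γ(hypo_n)`. -/
def Adj (n : ℕ) (u v : List ℕ) : Prop := ∃ i, Edge n i u v ∨ Edge n i v u

/-- `v` lies in the connected component `Γ(hypo_n, u)` of `u` in the quasi-crystal graph. -/
def SameComp (n : ℕ) : List ℕ → List ℕ → Prop := Relation.ReflTransGen (Adj n)

/-- `u` is a highest-weight word: no raising operator `e_i` is defined on `u`. -/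
def HighestWeight (n : ℕ) (u : List ℕ) : Prop := ∀ i, 1 ≤ i → i < n → qe i u = none

/-- `θ` is a quasi-crystal isomorphism from the component of `u` onto the component of `v`:
a weight-preserving bijection preserving labelled edges in both directions. -/
def IsQCIso (n : ℕ) (u v : List ℕ) (θ : List ℕ → List ℕ) : Prop :=
  Set.BijOn θ {x | SameComp n u x} {y | SameComp n v y} ∧
  (∀ x, SameComp n u x → wt (θ x) = wt x) ∧
  (∀ x y, SameComp n u x → SameComp n u y → ∀ i, (Edge n i x y ↔ Edge n i (θ x) (θ y)))

/-- `u ∼ v`: there is a quasi-crystal isomorphism between the components of `u` and `v`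
taking `u` to `v`. -/
def Sim (n : ℕ) (u v : List ℕ) : Prop :=
  ∃ θ : List ℕ → List ℕ, IsQCIso n u v θ ∧ θ u = v

/-- The standardization of `u`: position `k` receives the rank (starting at 1) of the
pair `(u_k, k)` among all pairs `(u_l, l)` ordered lexicographically. -/
def std (u : List ℕ) : List ℕ :=
  (List.range u.length).map fun k =>
    1 + ((List.range u.length).filter fun l =>
      u.getD l 0 < u.getD k 0 ∨ (u.getD l 0 = u.getD k 0 ∧ l < k)).length

/-- The maximal strictly decreasing factors of a word (the columns of its
quasi-ribbon tabloid, each read bottom-to-top). -/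
def decFactors : List ℕ → List (List ℕ)
  | [] => []
  | a :: rest =>
    match decFactors rest with
    | (b :: f) :: fs => if b < a then (a :: b :: f) :: fs else [a] :: (b :: f) :: fs
    | l => [a] :: l

/-- `w` is a quasi-ribbon word: its quasi-ribbon tabloid is a quasi-ribbon tableau,
i.e. the bottom entry of each column is ≤ the top entry of the next column. -/
def IsQRWord (w : List ℕ) : Prop :=
  (decFactors w).Chain' fun c d => c.headD 0 ≤ d.getLastD 0

/-- Row lengths (top to bottom) of the ribbon diagram whose column heights
(left to right) are given. -/
def rowLengths : List ℕ → List ℕ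
  | [] => []
  | [d] => List.replicate d 1
  | d :: e :: rest =>
    List.replicate (d - 1) 1 ++
      (match rowLengths (e :: rest) with
       | [] => [1]
       | r :: rs => (r + 1) :: rs)

/-- The shape (as a composition, listed top row first) of the quasi-ribbon tabloid of `w`. -/
def shape (w : List ℕ) : List ℕ := rowLengths ((decFactors w).map List.length)

/-- Columns of the quasi-ribbon tableau of shape `α` whose `j`-th row consists
entirely of symbols `j`, where rows are labelled starting from `j₀`. -/
def hwCols : List ℕ → ℕ → List (List ℕ)
  | [], _ => []
  | [a], j => List.replicate a [j]
  | a :: b :: rest, j =>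
    List.replicate (a - 1) [j] ++
      (match hwCols (b :: rest) (j + 1) with
       | [] => [[j]]
       | c :: cs => (c ++ [j]) :: cs)

/-- The column reading of the quasi-ribbon tableau of shape `α` whose `j`-th row
consists entirely of symbols `j`. -/
def hwQR (α : List ℕ) : List ℕ := (hwCols α 1).flatten

/-- The defining relations `R_hypo` of the hypoplactic monoid of rank `n`. -/
inductive HypoRel (n : ℕ) : List ℕ → List ℕ → Prop
  | knuth1 {a b c : ℕ} : 1 ≤ a → a ≤ b → b < c → c ≤ n → HypoRel n [a, c, b] [c, a, b]
  | knuth2 {a b c : ℕ} : 1 ≤ a → a < b → b ≤ c → c ≤ n → HypoRel n [b, a, c] [b, c, a]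
  | quasi1 {a b c d : ℕ} : 1 ≤ a → a ≤ b → b < c → c ≤ d → d ≤ n →
      HypoRel n [c, a, d, b] [a, c, b, d]
  | quasi2 {a b c d : ℕ} : 1 ≤ a → a < b → b ≤ c → c < d → d ≤ n →
      HypoRel n [b, d, a, c] [d, b, c, a]

/-- The hypoplactic congruence `≡_hypo`: the congruence on the free monoid generated
by the relations `R_hypo`. -/
inductive HypoCong (n : ℕ) : List ℕ → List ℕ → Prop
  | of {u v} : HypoRel n u v → HypoCong n u v
  | refl (u) : HypoCong n u u
  | symm {u v} : HypoCong n u v → HypoCong n v u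
  | trans {u v w} : HypoCong n u v → HypoCong n v w → HypoCong n u w
  | append {u v u' v'} : HypoCong n u v → HypoCong n u' v' →
      HypoCong n (u ++ u') (v ++ v')

/-- The signature word of `u` for index `i`: each letter `i` becomes `(position, true)`
(that is, `+`) and each letter `i+1` becomes `(position, false)` (that is, `−`). -/
def signWord (i : ℕ) (u : List ℕ) : List (ℕ × Bool) :=
  (u.zipIdx.map Prod.swap).filterMap fun pa =>
    if pa.2 = i then some (pa.1, true)
    else if pa.2 = i + 1 then some (pa.1, false) else none

/-- Iteratively delete factors `−+` from a signature word, producing the reduced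
word `+^p −^q`. -/
def reduce : List (ℕ × Bool) → List (ℕ × Bool)
  | [] => []
  | x :: rest =>
    match reduce rest with
    | y :: rest' => if x.2 = false ∧ y.2 = true then rest' else x :: y :: rest'
    | [] => [x]

/-- The Kashiwara raising operator `ẽ_i`, computed by the signature rule: change to `i`
the letter `i+1` corresponding to the leftmost `−` of the reduced signature word. -/
def KE (i : ℕ) (u : List ℕ) : Option (List ℕ) :=
  (((reduce (signWord i u)).filter fun x => !x.2).head?).map fun x => u.set x.1 i

/-- The Kashiwara lowering operator `f̃_i`, computed by the signature rule: change to `i+1`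
the letter `i` corresponding to the rightmost `+` of the reduced signature word. -/
def KF (i : ℕ) (u : List ℕ) : Option (List ℕ) :=
  (((reduce (signWord i u)).filter fun x => x.2).getLast?).map fun x => u.set x.1 (i + 1)

/-- The Schützenberger involution on `𝒜_n^*`: reverse the word and replace each
letter `a` by `n − a + 1`. -/
def sharp (n : ℕ) (u : List ℕ) : List ℕ := u.reverse.map fun a => n + 1 - a

/-- The largest letter occurring in `u` (0 for the empty word). -/
def maxLetter (u : List ℕ) : ℕ := u.foldr max 0

/-- `β` is coarser than `α` (`β ⪯ α`): they have the same weight and every proper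
partial sum of `β` is a proper partial sum of `α`. -/
def Coarser (β α : List ℕ) : Prop :=
  β.sum = α.sum ∧ ∀ p < β.length, ∃ m < α.length, (β.take p).sum = (α.take m).sum

end
end HypoCrystal

/-!
Each `f_i` turns a letter `i` into `i + 1` in a word with no `i + 1` to its left and no `i` to
its right, so it preserves every comparison between the pairs `(u_k, k)` that `std` ranks; hence
`std` is constant on components. Conversely, raising operators decrease the sum of the letters,
so every component contains a highest-weight word, and a highest-weight word is determined by its
standardization: going through the positions in standardization order, each letter equals the
previous one, plus one exactly when the previous position lies to its right.
-/

namespace HypoCrystal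

lemma getD_append_cons {α : Type*} (x y : List α) (c d : α) (l : ℕ) :
    (x ++ c :: y).getD l d =
      if l < x.length then x.getD l d
      else if l = x.length then c
      else y.getD (l - (x.length + 1)) d := by
  split_ifs with h₁ h₂
  · exact List.getD_append _ _ _ _ h₁
  · subst h₂
    simp
  · rw [List.getD_append_right _ _ _ _ (by omega),
      show l - x.length = l - (x.length + 1) + 1 by omega]
    simp

lemma getD_mem {α : Type*} {w : List α} {l : ℕ} (d : α) (h : l < w.length) : w.getD l d ∈ w := by
  rw [List.getD_eq_getElem _ _ h]
  exact List.getElem_mem _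

section

variable {n i j k l a b : ℕ} {u v x y : List ℕ}

lemma replaceFirst_eq_some_iff :
    replaceFirst a b u = some v ↔ ∃ x y, u = x ++ a :: y ∧ v = x ++ b :: y ∧ a ∉ x := by
  induction u generalizing v with
  | nil => simp [replaceFirst]
  | cons c t ih =>
    by_cases hc : c = a
    · subst hc
      simp only [replaceFirst, if_pos, Option.some.injEq]
      constructor
      · rintro rfl
        exact ⟨[], t, rfl, rfl, List.not_mem_nil⟩
      · rintro ⟨_ | ⟨d, x⟩, y, hu, rfl, hx⟩ <;> simp_all
    · simp only [replaceFirst, if_neg hc, Option.map_eq_some_iff, ih]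
      constructor
      · rintro ⟨w, ⟨x, y, rfl, rfl, hx⟩, rfl⟩
        exact ⟨c :: x, y, rfl, rfl, by simp [hx, Ne.symm hc]⟩
      · rintro ⟨_ | ⟨d, x⟩, y, hu, rfl, hx⟩
        · simp_all
        · simp only [List.cons_append, List.cons.injEq] at hu
          obtain ⟨rfl, rfl⟩ := hu
          exact ⟨x ++ b :: y, ⟨x, y, rfl, rfl, fun h => hx (List.mem_cons_of_mem _ h)⟩, rfl⟩

lemma replaceFirst_eq_none_iff : replaceFirst a b u = none ↔ a ∉ u := by
  induction u with
  | nil => simp [replaceFirst]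
  | cons c t ih =>
    by_cases hc : c = a
    · simp [replaceFirst, hc]
    · simp [replaceFirst, hc, ih, Ne.symm hc]

def stdKey (u : List ℕ) (k : ℕ) : ℕ ×ₗ ℕ := toLex (u.getD k 0, k)

def stdRank (u : List ℕ) (k : ℕ) : ℕ :=
  ((List.range u.length).filter fun l => stdKey u l < stdKey u k).length

lemma std_eq_map_stdRank (u : List ℕ) :
    std u = (List.range u.length).map fun k => 1 + stdRank u k := by
  simp only [std, stdRank, stdKey, Prod.Lex.toLex_lt_toLex]

lemma length_eq_of_std_eq (h : std u = std v) : u.length = v.length := by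
  simpa [std] using congrArg List.length h

lemma stdRank_lt_stdRank (hl : l < u.length) (h : stdKey u l < stdKey u k) :
    stdRank u l < stdRank u k := by
  have hsub := List.monotone_filter_right (List.range u.length)
    (p := fun j => decide (stdKey u j < stdKey u l))
    (q := fun j => decide (stdKey u j < stdKey u k))
    (fun j hj => by simp only [decide_eq_true_eq] at hj ⊢; exact hj.trans h)
  refine lt_of_le_of_ne hsub.length_le fun heq => ?_
  have hmem : l ∈ (List.range u.length).filter fun j => stdKey u j < stdKey u k := by
    simp [hl, h]
  rw [← hsub.eq_of_length heq] at hmem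
  simp at hmem

lemma stdRank_eq_of_std_eq (h : std u = std v) (hk : k < u.length) :
    stdRank u k = stdRank v k := by
  have := congrArg (·[k]?) h
  simp only [std_eq_map_stdRank, List.getElem?_map, List.getElem?_range hk,
    List.getElem?_range (length_eq_of_std_eq h ▸ hk), Option.map_some,
    Option.some.injEq] at this
  omega

lemma stdKey_lt_of_std_eq (h : std u = std v) (hk : k < u.length) (hl : l < u.length)
    (hlk : stdKey u l < stdKey u k) : stdKey v l < stdKey v k := by
  have hrank : stdRank v l < stdRank v k := by
    rw [← stdRank_eq_of_std_eq h hk, ← stdRank_eq_of_std_eq h hl]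
    exact stdRank_lt_stdRank hl hlk
  by_contra hge
  rcases (not_lt.1 hge).lt_or_eq with hkl | hkl
  · exact (stdRank_lt_stdRank (length_eq_of_std_eq h ▸ hk) hkl).not_gt hrank
  · obtain rfl : k = l := congrArg (fun p => (ofLex p).2) hkl
    exact hrank.false

lemma stdKey_lt_iff_of_std_eq (h : std u = std v) (hk : k < u.length) (hl : l < u.length) :
    stdKey u l < stdKey u k ↔ stdKey v l < stdKey v k := by
  have hlen := length_eq_of_std_eq h
  exact ⟨stdKey_lt_of_std_eq h hk hl, stdKey_lt_of_std_eq h.symm (hlen ▸ hk) (hlen ▸ hl)⟩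

lemma std_eq_of_stdKey_lt_iff (hlen : u.length = v.length)
    (h : ∀ k < u.length, ∀ l < u.length, (stdKey u l < stdKey u k ↔ stdKey v l < stdKey v k)) :
    std u = std v := by
  simp only [std_eq_map_stdRank, stdRank, ← hlen]
  refine List.map_congr_left fun k hk => ?_
  rw [List.mem_range] at hk
  congr 2
  exact List.filter_congr fun l hl => decide_eq_decide.2 (h k hk l (List.mem_range.1 hl))

lemma exists_stdKey_pred (hex : ∃ l < u.length, stdKey u l < stdKey u k) :
    ∃ j < u.length, stdKey u j < stdKey u k ∧
      ∀ l < u.length, stdKey u l < stdKey u k → stdKey u l ≤ stdKey u j := by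
  obtain ⟨j, hj, hmax⟩ := Finset.exists_max_image
    ((Finset.range u.length).filter fun l => stdKey u l < stdKey u k) (stdKey u)
    (by simpa [Finset.Nonempty] using hex)
  simp only [Finset.mem_filter, Finset.mem_range] at hj hmax
  exact ⟨j, hj.1, hj.2, fun l hl hlk => hmax l ⟨hl, hlk⟩⟩

lemma std_append_cons_succ (hx : i + 1 ∉ x) (hy : i ∉ y) :
    std (x ++ (i + 1) :: y) = std (x ++ i :: y) := by
  refine std_eq_of_stdKey_lt_iff (by simp) fun k hk l hl => ?_
  have hxk : k < x.length → x.getD k 0 ≠ i + 1 := fun h e => hx (e ▸ getD_mem 0 h)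
  have hxl : l < x.length → x.getD l 0 ≠ i + 1 := fun h e => hx (e ▸ getD_mem 0 h)
  have hyk : k - (x.length + 1) < y.length → y.getD (k - (x.length + 1)) 0 ≠ i :=
    fun h e => hy (e ▸ getD_mem 0 h)
  have hyl : l - (x.length + 1) < y.length → y.getD (l - (x.length + 1)) 0 ≠ i :=
    fun h e => hy (e ▸ getD_mem 0 h)
  simp only [List.length_append, List.length_cons] at hk hl
  simp only [stdKey, Prod.Lex.toLex_lt_toLex, getD_append_cons]
  split_ifs <;> omega

lemma HasInv.exists_getD (h : HasInv i u) :
    ∃ l₁ l₂, l₁ < l₂ ∧ l₂ < u.length ∧ u.getD l₁ 0 = i + 1 ∧ u.getD l₂ 0 = i := by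
  obtain ⟨v, w, x, rfl⟩ := h
  refine ⟨v.length, v.length + 1 + w.length, by omega, by simp; omega, by simp, ?_⟩
  rw [List.append_assoc, List.cons_append, getD_append_cons, if_neg (by omega),
    if_neg (by omega), show v.length + 1 + w.length - (v.length + 1) = w.length by omega]
  simp

lemma not_hasInv_append_cons (hx : i + 1 ∉ x) (hy : i ∉ y) : ¬ HasInv i (x ++ i :: y) := by
  intro h
  obtain ⟨l₁, l₂, hl, hl₂, e₁, e₂⟩ := h.exists_getD
  have hx' : l₁ < x.length → x.getD l₁ 0 ≠ i + 1 := fun h e => hx (e ▸ getD_mem 0 h)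
  have hy' : l₂ - (x.length + 1) < y.length → y.getD (l₂ - (x.length + 1)) 0 ≠ i :=
    fun h e => hy (e ▸ getD_mem 0 h)
  simp only [List.length_append, List.length_cons] at hl₂
  rw [getD_append_cons] at e₁ e₂
  split_ifs at e₁ e₂ <;> omega

lemma qf_eq_some_iff :
    qf i u = some v ↔ ∃ x y, u = x ++ i :: y ∧ v = x ++ (i + 1) :: y ∧ i + 1 ∉ x ∧ i ∉ y := by
  constructor
  · intro h
    unfold qf at h
    split_ifs at h with hinv
    obtain ⟨w, hw, rfl⟩ := Option.map_eq_some_iff.1 h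
    obtain ⟨y, x, hu, rfl, hy⟩ := replaceFirst_eq_some_iff.1 hw
    rw [List.reverse_eq_iff] at hu
    subst hu
    refine ⟨x.reverse, y.reverse, by simp, by simp, fun hx => hinv ?_, by simpa using hy⟩
    obtain ⟨s, t, hst⟩ := List.append_of_mem hx
    exact ⟨s, t, y.reverse, by simp [hst]⟩
  · rintro ⟨x, y, rfl, rfl, hx, hy⟩
    rw [qf, if_neg (not_hasInv_append_cons hx hy),
      replaceFirst_eq_some_iff.2 ⟨y.reverse, x.reverse, by simp, rfl, by simpa using hy⟩]
    simp

lemma exists_of_qe_eq_some (h : qe i u = some v) :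
    ∃ x y, u = x ++ (i + 1) :: y ∧ v = x ++ i :: y ∧ i + 1 ∉ x ∧ i ∉ y := by
  unfold qe at h
  split_ifs at h with hinv
  obtain ⟨x, y, rfl, rfl, hx⟩ := replaceFirst_eq_some_iff.1 h
  refine ⟨x, y, rfl, rfl, hx, fun hy => hinv ?_⟩
  obtain ⟨s, t, rfl⟩ := List.append_of_mem hy
  exact ⟨x, s, t, by simp⟩

lemma qf_eq_some_of_qe_eq_some (h : qe i u = some v) : qf i v = some u := by
  obtain ⟨x, y, rfl, rfl, hx, hy⟩ := exists_of_qe_eq_some h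
  exact qf_eq_some_iff.2 ⟨x, y, rfl, rfl, hx, hy⟩

lemma std_eq_of_qf_eq_some (h : qf i u = some v) : std v = std u := by
  obtain ⟨x, y, rfl, rfl, hx, hy⟩ := qf_eq_some_iff.1 h
  exact std_append_cons_succ hx hy

lemma std_eq_of_adj (h : Adj n u v) : std u = std v := by
  obtain ⟨i, ⟨-, -, h⟩ | ⟨-, -, h⟩⟩ := h
  · exact (std_eq_of_qf_eq_some h).symm
  · exact std_eq_of_qf_eq_some h

lemma std_eq_of_sameComp (h : SameComp n u v) : std u = std v := by
  induction h with
  | refl => rfl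
  | tail _ hadj ih => exact ih.trans (std_eq_of_adj hadj)

instance : Std.Symm (Adj n) := ⟨fun _ _ ⟨i, h⟩ => ⟨i, h.symm⟩⟩

lemma sameComp_symm (h : SameComp n u v) : SameComp n v u :=
  Std.Symm.symm (r := Relation.ReflTransGen (Adj n)) _ _ h

lemma HighestWeight.hasInv (hw : HighestWeight n u) (hu : IsWord n u) (hi : 1 ≤ i)
    (hmem : i + 1 ∈ u) : HasInv i u := by
  by_contra hinv
  have hqe := hw i hi (by have := (hu _ hmem).2; omega)
  rw [qe, if_neg hinv, replaceFirst_eq_none_iff] at hqe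
  exact hqe hmem

lemma HighestWeight.getD_eq_one (hw : HighestWeight n u) (hu : IsWord n u) (hk : k < u.length)
    (hmin : ∀ l < u.length, ¬ stdKey u l < stdKey u k) : u.getD k 0 = 1 := by
  have hk₁ := (hu _ (getD_mem 0 hk)).1
  by_contra hne
  obtain ⟨-, l₂, -, hl₂, -, e₂⟩ := (hw.hasInv hu (i := u.getD k 0 - 1) (by omega)
    (by rw [Nat.sub_add_cancel hk₁]; exact getD_mem 0 hk)).exists_getD
  exact hmin l₂ hl₂ (Prod.Lex.toLex_lt_toLex.2 (Or.inl (by omega)))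

/-- If `u_j < u_k`, the `u_k - 1` standing to the right of some `u_k` lies between `k` and `j`. -/
lemma HighestWeight.getD_eq_getD_pred (hw : HighestWeight n u) (hu : IsWord n u)
    (hk : k < u.length) (hj : j < u.length) (hjk : stdKey u j < stdKey u k)
    (hmax : ∀ l < u.length, stdKey u l < stdKey u k → stdKey u l ≤ stdKey u j) :
    u.getD k 0 = u.getD j 0 + if k < j then 1 else 0 := by
  simp only [stdKey, Prod.Lex.toLex_lt_toLex, Prod.Lex.toLex_le_toLex] at hjk hmax
  have hj₁ := (hu _ (getD_mem 0 hj)).1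
  by_cases heq : u.getD j 0 = u.getD k 0
  · rw [if_neg (by omega)]
    omega
  obtain ⟨l₁, l₂, hl, hl₂, e₁, e₂⟩ := (hw.hasInv hu (i := u.getD k 0 - 1) (by omega)
    (by rw [Nat.sub_add_cancel (by omega)]; exact getD_mem 0 hk)).exists_getD
  have h₂ := hmax l₂ hl₂ (by omega)
  have h₁ : ¬ l₁ < k := fun h => by have := hmax l₁ (by omega) (by omega); omega
  rw [if_pos (by omega)]
  omega

lemma HighestWeight.eq_of_std_eq (hwu : HighestWeight n u) (hwv : HighestWeight n v)
    (hu : IsWord n u) (hv : IsWord n v) (h : std u = std v) : u = v := by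
  have hlen := length_eq_of_std_eq h
  have hlt (k l) (hk : k < v.length) (hl : l < v.length) :=
    stdKey_lt_iff_of_std_eq h (hlen ▸ hk : k < u.length) (hlen ▸ hl : l < u.length)
  suffices hget : ∀ k < u.length, u.getD k 0 = v.getD k 0 by
    refine List.ext_getElem hlen fun k hk hk' => ?_
    simpa [List.getD_eq_getElem, hk, hk'] using hget k hk
  intro k
  induction k using (InvImage.wf (stdKey u) wellFounded_lt).induction with
  | _ k ih =>
  intro hk
  by_cases hex : ∃ l < u.length, stdKey u l < stdKey u k
  · obtain ⟨j, hj, hjk, hmax⟩ := exists_stdKey_pred hex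
    have hmaxv (l) (hl : l < v.length) (hlk : stdKey v l < stdKey v k) :
        stdKey v l ≤ stdKey v j := by
      rw [← not_lt, ← hlt l j hl (hlen ▸ hj), not_lt]
      exact hmax l (hlen ▸ hl) ((hlt k l (hlen ▸ hk) hl).2 hlk)
    rw [hwu.getD_eq_getD_pred hu hk hj hjk hmax,
      hwv.getD_eq_getD_pred hv (hlen ▸ hk) (hlen ▸ hj) ((hlt k j (hlen ▸ hk) (hlen ▸ hj)).1 hjk)
        hmaxv, ih j hjk hj]
  · push Not at hex
    rw [hwu.getD_eq_one hu hk fun l hl => not_lt.2 (hex l hl),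
      hwv.getD_eq_one hv (hlen ▸ hk) fun l hl hlk =>
        (hex l (hlen ▸ hl)).not_gt ((hlt k l (hlen ▸ hk) hl).2 hlk)]

lemma exists_highestWeight_sameComp (hu : IsWord n u) :
    ∃ w, IsWord n w ∧ HighestWeight n w ∧ SameComp n u w := by
  induction hs : u.sum using Nat.strong_induction_on generalizing u with
  | _ s ih =>
  by_cases hw : HighestWeight n u
  · exact ⟨u, hu, hw, .refl⟩
  simp only [HighestWeight, not_forall] at hw
  obtain ⟨i, hi, hin, hqe⟩ := hw
  obtain ⟨u', hu'⟩ := Option.ne_none_iff_exists'.1 hqe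
  have hadj : Adj n u u' := ⟨i, .inr ⟨hi, hin, qf_eq_some_of_qe_eq_some hu'⟩⟩
  obtain ⟨x, y, rfl, rfl, -, -⟩ := exists_of_qe_eq_some hu'
  have hword : IsWord n (x ++ i :: y) := by
    intro b hb
    simp only [List.mem_append, List.mem_cons] at hb
    rcases hb with hb | rfl | hb
    · exact hu b (by simp [hb])
    · have := hu (b + 1) (by simp)
      omega
    · exact hu b (by simp [hb])
  obtain ⟨w, hw, hhw, hcomp⟩ := ih _ (by simp [← hs]) hword rfl
  exact ⟨w, hw, hhw, .head hadj hcomp⟩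

end

/-- Two words `u, v ∈ 𝒜_n^*` lie in the same connected component of
the quasi-crystal graph `Γ(hypo_n)` if and only if `std(u) = std(v)`. -/
theorem sameComponent_iff_std_eq (n : ℕ) (u v : List ℕ)
    (hu : IsWord n u) (hv : IsWord n v) :
    SameComp n u v ↔ std u = std v := by
  refine ⟨std_eq_of_sameComp, fun h => ?_⟩
  obtain ⟨u', hu', hwu, huu⟩ := exists_highestWeight_sameComp hu
  obtain ⟨v', hv', hwv, hvv⟩ := exists_highestWeight_sameComp hv
  obtain rfl : u' = v' := hwu.eq_of_std_eq hwv hu' hv'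
    (by rw [← std_eq_of_sameComp huu, h, std_eq_of_sameComp hvv])
  exact huu.trans (sameComp_symm hvv)

end HypoCrystal
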